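/- Discrete symplectic area and the vertical coordinate of Heisenberg products: let k ≥ 2, let v₁, …, v_k ∈ ℍₙ, and set w_i = v₁·v₂·…·v_i (Heisenberg product) for 1 ≤ i ≤ k. Let γ : [0,1] → ℝ^(2n) be the piecewise-linear curve with γ((i−1)/(k−1)) = π(w_i) for 1 ≤ i ≤ k, affine on each interval [(i−1)/(k−1), i/(k−1)]. Then z(w_k) = S(γ) + ∑_{i=1}^k z(v_i), where S(γ) is the symplectic area of γ (which exists since γ is Lipschitz). -/

import Mathlib

open MeasureTheory Set Filter Topology
open scoped ENNReal

noncomputable section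

/-- Euclidean space `ℝ^(2n)`, the horizontal layer. -/
abbrev E (n : ℕ) : Type := EuclideanSpace ℝ (Fin (2 * n))

/-- The Heisenberg group `ℍₙ` as a set: `ℝ^(2n) × ℝ`. -/
abbrev Hpt (n : ℕ) : Type := E n × ℝ

/-- The standard symplectic form on `ℝ^(2n)` with coordinates `(x₁,y₁,…,xₙ,yₙ)`. -/
def omegaF (n : ℕ) (u v : E n) : ℝ :=
  ∑ i : Fin n,
    (u ⟨2 * i.1, by have := i.isLt; omega⟩ * v ⟨2 * i.1 + 1, by have := i.isLt; omega⟩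
     - v ⟨2 * i.1, by have := i.isLt; omega⟩ * u ⟨2 * i.1 + 1, by have := i.isLt; omega⟩)

/-- The Heisenberg group law. -/
def hmul (n : ℕ) (a b : Hpt n) : Hpt n :=
  (a.1 + b.1, a.2 + b.2 + (1 / 2) * omegaF n a.1 b.1)

/-- The Heisenberg group inverse. -/
def hinv (n : ℕ) (a : Hpt n) : Hpt n := (-a.1, -a.2)

/-- The Korányi norm. -/
def kor (n : ℕ) (q : Hpt n) : ℝ := (‖q.1‖ ^ 4 + 16 * q.2 ^ 2) ^ ((1 : ℝ) / 4)

/-- The Korányi (left-invariant, homogeneous) distance. -/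
def dK (n : ℕ) (p q : Hpt n) : ℝ := kor n (hmul n (hinv n p) q)

/-- The discrete symplectic area `Ŝ(γ_P)` of `γ` along the partition
`t 0 < t 1 < … < t k`:  `½ ∑_i ω(γ(t_i), γ(t_{i+1}))`. -/
def SHat (n : ℕ) (γ : ℝ → E n) (k : ℕ) (t : Fin (k + 1) → ℝ) : ℝ :=
  (1 / 2) * ∑ i : Fin k, omegaF n (γ (t i.castSucc)) (γ (t i.succ))

/-- The symplectic area of `γ : [a,b] → ℝ^(2n)` exists and equals `L`. -/
def IsSympArea (n : ℕ) (a b : ℝ) (γ : ℝ → E n) (L : ℝ) : Prop :=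
  ∀ ε > (0 : ℝ), ∃ δ > (0 : ℝ), ∀ (k : ℕ) (t : Fin (k + 1) → ℝ),
    t 0 = a → t (Fin.last k) = b →
    (∀ i : Fin k, t i.castSucc < t i.succ) →
    (∀ i : Fin k, t i.succ - t i.castSucc < δ) →
    |SHat n γ k t - L| < ε

/-!
Since `π` is additive and `ω(a, a) = 0`, the Heisenberg law gives
`z(w_{i+1}) = z(w_i) + z(v_{i+1}) + ½ ω(π w_i, π w_{i+1})`, so `z(w_k) - ∑ z(v_i)` is the discrete
symplectic area `½ ∑ ω(π w_i, π w_{i+1})` of the polygon through the nodes `π w_i`.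

For a polygon `γ` with nodes `p_j` at the uniform times `j/m`, the function
`F(x) = ½ ∑_j c_j(x) ω(p_j, p_{j+1})`, where `c_j(x) ∈ [0, 1]` is the fraction of segment `j`
traversed by time `x`, satisfies `½ ω(γ s, γ t) = F t - F s` whenever `s, t` lie on one segment.
A short interval `[s, t]` straddling a node `u` has error `½ ω(γ s - γ u, γ t - γ u) = O((t - s)²)`,
so along partitions of small mesh the discrete areas converge to `F 1 - F 0`.
-/

section Heisenberg

variable {n : ℕ}

theorem omegaF_add_right_self (a b : E n) : omegaF n a (a + b) = omegaF n a b := by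
  unfold omegaF
  refine Finset.sum_congr rfl fun i _ => ?_
  simp only [PiLp.add_apply]
  ring

theorem omegaF_add_smul_sub (p q : E n) (s t : ℝ) :
    omegaF n (p + s • (q - p)) (p + t • (q - p)) = (t - s) * omegaF n p q := by
  unfold omegaF
  rw [Finset.mul_sum]
  refine Finset.sum_congr rfl fun i _ => ?_
  simp only [PiLp.add_apply, PiLp.smul_apply, PiLp.sub_apply, smul_eq_mul]
  ring

theorem omegaF_sub_sub (a b c : E n) :
    omegaF n (a - b) (c - b) = omegaF n a c - omegaF n a b - omegaF n b c := by
  unfold omegaF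
  rw [← Finset.sum_sub_distrib, ← Finset.sum_sub_distrib]
  refine Finset.sum_congr rfl fun i _ => ?_
  simp only [PiLp.sub_apply]
  ring

theorem abs_omegaF_le (u v : E n) : |omegaF n u v| ≤ 2 * n * (‖u‖ * ‖v‖) := by
  have hcoord : ∀ (x y : E n) (a b : Fin (2 * n)), |x a * y b| ≤ ‖x‖ * ‖y‖ := fun x y a b => by
    rw [abs_mul]
    exact mul_le_mul (by simpa only [Real.norm_eq_abs] using PiLp.norm_apply_le x a)
      (by simpa only [Real.norm_eq_abs] using PiLp.norm_apply_le y b) (abs_nonneg _) (norm_nonneg _)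
  calc |omegaF n u v| ≤ ∑ _i : Fin n, 2 * (‖u‖ * ‖v‖) := by
        refine (Finset.abs_sum_le_sum_abs _ _).trans (Finset.sum_le_sum fun i _ => ?_)
        refine (abs_sub _ _).trans ?_
        linarith [hcoord u v ⟨2 * i.1, by omega⟩ ⟨2 * i.1 + 1, by omega⟩,
          hcoord v u ⟨2 * i.1, by omega⟩ ⟨2 * i.1 + 1, by omega⟩]
    _ = 2 * n * (‖u‖ * ‖v‖) := by
        rw [Finset.sum_const, Finset.card_univ, Fintype.card_fin, nsmul_eq_mul]
        ring

theorem snd_of_partial_products {v w : ℕ → Hpt n} (hw0 : w 0 = v 0) :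
    ∀ m, (∀ i < m, w (i + 1) = hmul n (w i) (v (i + 1))) →
      (w m).2 = ∑ i ∈ Finset.range (m + 1), (v i).2
        + 1 / 2 * ∑ j ∈ Finset.range m, omegaF n (w j).1 (w (j + 1)).1
  | 0, _ => by simp [hw0]
  | m + 1, hw => by
    have ih := snd_of_partial_products hw0 m fun i hi => hw i (hi.trans m.lt_succ_self)
    rw [Finset.sum_range_succ _ m, Finset.sum_range_succ _ (m + 1), hw m m.lt_succ_self]
    simp only [hmul, omegaF_add_right_self, ih]
    ring

end Heisenberg

theorem Fin.sum_succ_sub_castSucc {M : Type*} [AddCommGroup M] {k : ℕ} (g : Fin (k + 1) → M) :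
    ∑ i : Fin k, (g i.succ - g i.castSucc) = g (Fin.last k) - g 0 := by
  rw [Finset.sum_sub_distrib, sub_eq_sub_iff_add_eq_add, add_comm, ← Fin.sum_univ_succ g,
    Fin.sum_univ_castSucc g, add_comm]

theorem isSympArea_of_sq_error {n : ℕ} {a b δ₀ C : ℝ} {γ : ℝ → E n} (F : ℝ → ℝ)
    (hδ₀ : 0 < δ₀) (hC : 0 ≤ C)
    (hF : ∀ s t, a ≤ s → s < t → t ≤ b → t - s < δ₀ →
      |1 / 2 * omegaF n (γ s) (γ t) - (F t - F s)| ≤ C * (t - s) ^ 2) :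
    IsSympArea n a b γ (F b - F a) := by
  intro ε hε
  have hpos : 0 < C * |b - a| + 1 := by positivity
  set δ := min δ₀ (ε / (C * |b - a| + 1))
  have hδ : 0 < δ := lt_min hδ₀ (div_pos hε hpos)
  refine ⟨δ, hδ, fun k t ht0 htk hlt hmesh => ?_⟩
  have hmono : Monotone t := (Fin.strictMono_iff_lt_succ.2 hlt).monotone
  have hmem : ∀ i, a ≤ t i ∧ t i ≤ b :=
    fun i => ⟨ht0 ▸ hmono (Fin.zero_le i), htk ▸ hmono (Fin.le_last i)⟩
  have hterm : ∀ i : Fin k, |1 / 2 * omegaF n (γ (t i.castSucc)) (γ (t i.succ))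
      - (F (t i.succ) - F (t i.castSucc))| ≤ C * δ * (t i.succ - t i.castSucc) := fun i => by
    have hsq : C * (t i.succ - t i.castSucc) ^ 2 ≤ C * δ * (t i.succ - t i.castSucc) := by
      have := mul_le_mul_of_nonneg_left
        (mul_le_mul_of_nonneg_right (hmesh i).le (sub_nonneg.2 (hlt i).le)) hC
      linarith
    exact (hF _ _ (hmem _).1 (hlt i) (hmem _).2 ((hmesh i).trans_le (min_le_left _ _))).trans hsq
  have hsplit : SHat n γ k t - (F b - F a) = ∑ i : Fin k, (1 / 2 * omegaF n (γ (t i.castSucc))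
      (γ (t i.succ)) - (F (t i.succ) - F (t i.castSucc))) := by
    rw [Finset.sum_sub_distrib, Fin.sum_succ_sub_castSucc (fun i => F (t i)), ht0, htk, SHat,
      Finset.mul_sum]
  have hsmall : C * |b - a| * δ < ε := by
    calc C * |b - a| * δ ≤ C * |b - a| * (ε / (C * |b - a| + 1)) :=
          mul_le_mul_of_nonneg_left (min_le_right _ _) (by positivity)
      _ < ε := by
          rw [mul_div_assoc', div_lt_iff₀ hpos]
          nlinarith
  calc |SHat n γ k t - (F b - F a)|
      ≤ ∑ i : Fin k, C * δ * (t i.succ - t i.castSucc) :=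
        hsplit ▸ (Finset.abs_sum_le_sum_abs _ _).trans (Finset.sum_le_sum fun i _ => hterm i)
    _ = C * δ * (b - a) := by rw [← Finset.mul_sum, Fin.sum_succ_sub_castSucc t, ht0, htk]
    _ ≤ C * δ * |b - a| := mul_le_mul_of_nonneg_left (le_abs_self _) (mul_nonneg hC hδ.le)
    _ < ε := by linarith

theorem exists_nat_le_le_add_one {m : ℕ} (hm : 0 < m) {x : ℝ} (h0 : 0 ≤ x) (h1 : x ≤ m) :
    ∃ j < m, (j : ℝ) ≤ x ∧ x ≤ j + 1 := by
  rcases h1.lt_or_eq with h | rfl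
  · exact ⟨⌊x⌋₊, (Nat.floor_lt h0).2 h, Nat.floor_le h0, (Nat.lt_floor_add_one x).le⟩
  · refine ⟨m - 1, by omega, ?_, ?_⟩ <;> rw [Nat.cast_pred hm] <;> linarith

theorem projIcc_sub_natCast_of_ne {x : ℝ} {i j : ℕ} (hx : x ∈ Icc (j : ℝ) (j + 1)) (hij : i ≠ j) :
    (projIcc 0 1 zero_le_one (x - i) : ℝ) = if i < j then 1 else 0 := by
  rcases hij.lt_or_gt with h | h
  · have : (i : ℝ) + 1 ≤ j := by exact_mod_cast h
    rw [if_pos h, projIcc_of_right_le _ (by linarith [hx.1])]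
  · have : (j : ℝ) + 1 ≤ i := by exact_mod_cast h
    rw [if_neg h.not_gt, projIcc_of_le_left _ (by linarith [hx.2])]

section Polygon

variable {n m : ℕ} {p : ℕ → E n} {γ : ℝ → E n}

def IsUniformPolygon (n m : ℕ) (p : ℕ → E n) (γ : ℝ → E n) : Prop :=
  ∀ j < m, ∀ t : ℝ, (j : ℝ) ≤ t * m → t * m ≤ j + 1 →
    γ t = p j + (t * m - j) • (p (j + 1) - p j)

def polygonPrimitive (n m : ℕ) (p : ℕ → E n) (x : ℝ) : ℝ :=
  1 / 2 * ∑ j ∈ Finset.range m,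
    (projIcc 0 1 zero_le_one (x * m - j) : ℝ) * omegaF n (p j) (p (j + 1))

theorem polygonPrimitive_zero : polygonPrimitive n m p 0 = 0 := by
  unfold polygonPrimitive
  rw [Finset.sum_eq_zero, mul_zero]
  intro j _
  rw [zero_mul, zero_sub, projIcc_of_le_left _ (neg_nonpos.2 j.cast_nonneg), zero_mul]

theorem polygonPrimitive_one :
    polygonPrimitive n m p 1 = 1 / 2 * ∑ j ∈ Finset.range m, omegaF n (p j) (p (j + 1)) := by
  unfold polygonPrimitive
  congr 1
  refine Finset.sum_congr rfl fun j hj => ?_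
  have : (j : ℝ) + 1 ≤ m := by exact_mod_cast Finset.mem_range.1 hj
  rw [one_mul, projIcc_of_right_le _ (by linarith), one_mul]

theorem IsUniformPolygon.half_omegaF_eq_sub (hγ : IsUniformPolygon n m p γ) {j : ℕ} (hj : j < m)
    {s t : ℝ} (hs : (j : ℝ) ≤ s * m) (hst : s ≤ t) (ht : t * m ≤ j + 1) :
    1 / 2 * omegaF n (γ s) (γ t) = polygonPrimitive n m p t - polygonPrimitive n m p s := by
  have hstm : s * m ≤ t * m := mul_le_mul_of_nonneg_right hst m.cast_nonneg
  have hsj : s * m ∈ Icc (j : ℝ) (j + 1) := ⟨hs, hstm.trans ht⟩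
  have htj : t * m ∈ Icc (j : ℝ) (j + 1) := ⟨hs.trans hstm, ht⟩
  unfold polygonPrimitive
  rw [← mul_sub, ← Finset.sum_sub_distrib,
    Finset.sum_eq_single_of_mem j (Finset.mem_range.2 hj) fun i _ hij => by
      rw [projIcc_sub_natCast_of_ne hsj hij, projIcc_sub_natCast_of_ne htj hij, sub_self],
    projIcc_of_mem _ ⟨sub_nonneg.2 hsj.1, by linarith [hsj.2]⟩,
    projIcc_of_mem _ ⟨sub_nonneg.2 htj.1, by linarith [htj.2]⟩,
    hγ j hj s hsj.1 hsj.2, hγ j hj t htj.1 htj.2, omegaF_add_smul_sub, ← sub_mul]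

theorem IsUniformPolygon.norm_sub_le (hγ : IsUniformPolygon n m p γ) {j : ℕ} (hj : j < m)
    {s t : ℝ} (hs : (j : ℝ) ≤ s * m) (hst : s ≤ t) (ht : t * m ≤ j + 1) :
    ‖γ t - γ s‖ ≤ (m * ∑ i ∈ Finset.range m, ‖p (i + 1) - p i‖) * (t - s) := by
  have hstm : s * m ≤ t * m := mul_le_mul_of_nonneg_right hst m.cast_nonneg
  rw [hγ j hj s hs (hstm.trans ht), hγ j hj t (hs.trans hstm) ht, add_sub_add_left_eq_sub,
    ← sub_smul, norm_smul, Real.norm_eq_abs, abs_of_nonneg (by linarith)]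
  calc (t * m - j - (s * m - j)) * ‖p (j + 1) - p j‖ = (m * ‖p (j + 1) - p j‖) * (t - s) := by
        ring
    _ ≤ _ := by
        gcongr
        exact Finset.single_le_sum (f := fun i => ‖p (i + 1) - p i‖)
          (fun _ _ => norm_nonneg _) (Finset.mem_range.2 hj)

theorem IsUniformPolygon.abs_half_omegaF_sub_le (hγ : IsUniformPolygon n m p γ) (hm : 0 < m)
    {s t : ℝ} (hs : 0 ≤ s) (hst : s < t) (ht : t ≤ 1) (hδ : t - s < 1 / m) :
    |1 / 2 * omegaF n (γ s) (γ t) - (polygonPrimitive n m p t - polygonPrimitive n m p s)|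
      ≤ n * (m * ∑ i ∈ Finset.range m, ‖p (i + 1) - p i‖) ^ 2 * (t - s) ^ 2 := by
  set M := (m : ℝ) * ∑ i ∈ Finset.range m, ‖p (i + 1) - p i‖
  have hmpos : (0 : ℝ) < m := Nat.cast_pos.2 hm
  have hM : 0 ≤ M := by positivity
  have htm : t * m < s * m + 1 := by rw [lt_div_iff₀ hmpos] at hδ; linarith
  obtain ⟨j, hj, hjs, hsj⟩ := exists_nat_le_le_add_one hm (by positivity)
    (mul_le_of_le_one_left hmpos.le (hst.le.trans ht))
  by_cases htj : t * m ≤ j + 1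
  · rw [hγ.half_omegaF_eq_sub hj hjs hst.le htj, sub_self, abs_zero]
    positivity
  -- `[s, t]` straddles exactly one node `u`.
  set u := ((j : ℝ) + 1) / m
  have hum : u * m = j + 1 := div_mul_cancel₀ _ hmpos.ne'
  have hj1 : j + 1 < m := by
    have : (j : ℝ) + 1 < m := by nlinarith
    exact_mod_cast this
  have hsu : s ≤ u := le_of_mul_le_mul_right (hum ▸ hsj) hmpos
  have hut : u ≤ t := le_of_mul_le_mul_right (hum ▸ (not_le.1 htj).le) hmpos
  have hu : ((j + 1 : ℕ) : ℝ) = u * m := by push_cast; exact hum.symm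
  have hsplit : 1 / 2 * omegaF n (γ s) (γ t)
      - (polygonPrimitive n m p t - polygonPrimitive n m p s)
      = 1 / 2 * omegaF n (γ s - γ u) (γ t - γ u) := by
    rw [omegaF_sub_sub]
    linarith [hγ.half_omegaF_eq_sub hj hjs hsu hum.le,
      hγ.half_omegaF_eq_sub hj1 hu.le hut (by push_cast; linarith)]
  have hprod : ‖γ s - γ u‖ * ‖γ t - γ u‖ ≤ (M * (t - s)) * (M * (t - s)) := by
    rw [norm_sub_rev]
    refine mul_le_mul ((hγ.norm_sub_le hj hjs hsu hum.le).trans ?_)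
      ((hγ.norm_sub_le hj1 hu.le hut (by push_cast; linarith)).trans ?_) (norm_nonneg _)
      (by nlinarith)
    all_goals exact mul_le_mul_of_nonneg_left (by linarith) hM
  rw [hsplit, abs_mul, abs_of_pos (by norm_num : (0 : ℝ) < 1 / 2)]
  nlinarith [abs_omegaF_le (γ s - γ u) (γ t - γ u), (Nat.cast_nonneg n : (0 : ℝ) ≤ n)]

theorem IsUniformPolygon.isSympArea (hγ : IsUniformPolygon n m p γ) (hm : 0 < m) :
    IsSympArea n 0 1 γ (1 / 2 * ∑ j ∈ Finset.range m, omegaF n (p j) (p (j + 1))) := by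
  have h := isSympArea_of_sq_error (polygonPrimitive n m p) (one_div_pos.2 (Nat.cast_pos.2 hm))
    (by positivity : (0 : ℝ) ≤ n * (m * ∑ i ∈ Finset.range m, ‖p (i + 1) - p i‖) ^ 2)
    fun s t hs hst ht hδ => hγ.abs_half_omegaF_sub_le hm hs hst ht hδ
  rwa [polygonPrimitive_one, polygonPrimitive_zero, sub_zero] at h

end Polygon

theorem discrete_symp_area_heisenberg_general (n k : ℕ) (hk : 2 ≤ k)
    (v w : ℕ → Hpt n)
    (hw0 : w 0 = v 0)
    (hw : ∀ i : ℕ, i + 1 < k → w (i + 1) = hmul n (w i) (v (i + 1)))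
    (γ : ℝ → E n)
    (haff : ∀ i : ℕ, i + 1 < k →
      ∀ t ∈ Icc ((i : ℝ) / ((k : ℝ) - 1)) (((i : ℝ) + 1) / ((k : ℝ) - 1)),
        γ t = (w i).1 + (t * ((k : ℝ) - 1) - (i : ℝ)) • ((w (i + 1)).1 - (w i).1)) :
    IsSympArea n 0 1 γ ((w (k - 1)).2 - ∑ i ∈ Finset.range k, (v i).2) := by
  obtain ⟨m, rfl⟩ : ∃ m, k = m + 1 := ⟨k - 1, by omega⟩
  have hmpos : (0 : ℝ) < m := by exact_mod_cast (by omega : 0 < m)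
  have hK : ((m + 1 : ℕ) : ℝ) - 1 = m := by push_cast; ring
  rw [hK] at haff
  have hpoly : IsUniformPolygon n m (fun j => (w j).1) γ := fun j hj t hjt htj =>
    haff j (by omega) t ⟨(div_le_iff₀ hmpos).2 hjt, (le_div_iff₀ hmpos).2 htj⟩
  rw [Nat.add_sub_cancel, snd_of_partial_products hw0 m fun i hi => hw i (by omega),
    add_sub_cancel_left]
  exact hpoly.isSympArea (by omega)

/-- **Discrete symplectic area and the vertical coordinate of Heisenberg products**
(Lemma 2.13).  Let `v₁, …, v_k ∈ ℍₙ` (`k ≥ 2`, here indexed `v 0, …, v (k-1)`), let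
`w i = v 0 · v 1 ⋯ v i` be the partial Heisenberg products, and let `γ : [0,1] → ℝ^(2n)`
be the piecewise-linear curve with `γ(i/(k−1)) = π(w i)`, affine on each subinterval.
Then `z(w_{k-1}) = S(γ) + ∑_i z(v i)`, where `S(γ)` is the symplectic area of `γ`. -/
theorem discrete_symp_area_heisenberg (n k : ℕ) (hn : 1 ≤ n) (hk : 2 ≤ k)
    (v w : ℕ → Hpt n)
    (hw0 : w 0 = v 0)
    (hw : ∀ i : ℕ, i + 1 < k → w (i + 1) = hmul n (w i) (v (i + 1)))
    (γ : ℝ → E n)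
    (hnode : ∀ i : ℕ, i < k → γ ((i : ℝ) / ((k : ℝ) - 1)) = (w i).1)
    (haff : ∀ i : ℕ, i + 1 < k →
      ∀ t ∈ Icc ((i : ℝ) / ((k : ℝ) - 1)) (((i : ℝ) + 1) / ((k : ℝ) - 1)),
        γ t = (w i).1 + (t * ((k : ℝ) - 1) - (i : ℝ)) • ((w (i + 1)).1 - (w i).1)) :
    IsSympArea n 0 1 γ ((w (k - 1)).2 - ∑ i ∈ Finset.range k, (v i).2) :=
  discrete_symp_area_heisenberg_general n k hk v w hw0 hw γ haff
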